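/- Eigenvalues of the QSVE walk operator encode the singular values: let A ∈ ℝ^{N₁×N₂} be a nonzero matrix all of whose rows are nonzero, let P ∈ ℝ^{(N₁·N₂)×N₁} and Q ∈ ℝ^{(N₁·N₂)×N₂} be defined by P((i,j), i') = [i = i']·A(i,j)/‖A_i‖₂ and Q((i,j), j') = [j = j']·‖A_i‖₂/‖A‖_F, and set W := (2PPᵀ − I)(2QQᵀ − I) ∈ ℝ^{(N₁·N₂)×(N₁·N₂)}. Then for every nonzero singular value σ of A there exists θ ∈ [0, π] with cos(θ/2) = σ/‖A‖_F such that both e^{iθ} and e^{−iθ} are eigenvalues of W (regarded as a complex matrix); i.e., there exist nonzero w± ∈ ℂ^{N₁·N₂} with W w± = e^{±iθ} w±. -/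

import Mathlib

open scoped BigOperators Matrix

/-- Euclidean norm of the `i`-th row of `A`. -/
noncomputable def rowNorm {N₁ N₂ : ℕ} (A : Matrix (Fin N₁) (Fin N₂) ℝ) (i : Fin N₁) : ℝ :=
  Real.sqrt (∑ j : Fin N₂, A i j ^ 2)

/-- Frobenius norm of `A`. -/
noncomputable def frobNorm {N₁ N₂ : ℕ} (A : Matrix (Fin N₁) (Fin N₂) ℝ) : ℝ :=
  Real.sqrt (∑ i : Fin N₁, ∑ j : Fin N₂, A i j ^ 2)

/-- The Kerenidis–Prakash factor `P ∈ ℝ^{(N₁·N₂) × N₁}`: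
`P((i,j), i') = [i = i'] · A(i,j)/‖A_i‖₂`, realizing `|i⟩|0⟩ ↦ |i⟩|A_i⟩`. -/
noncomputable def Pmat {N₁ N₂ : ℕ} (A : Matrix (Fin N₁) (Fin N₂) ℝ) :
    Matrix (Fin N₁ × Fin N₂) (Fin N₁) ℝ :=
  Matrix.of fun p i' => if p.1 = i' then A p.1 p.2 / rowNorm A p.1 else 0

/-- The Kerenidis–Prakash factor `Q ∈ ℝ^{(N₁·N₂) × N₂}`:
`Q((i,j), j') = [j = j'] · ‖A_i‖₂/‖A‖_F`, realizing `|0⟩|j⟩ ↦ |Â⟩|j⟩`. -/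
noncomputable def Qmat {N₁ N₂ : ℕ} (A : Matrix (Fin N₁) (Fin N₂) ℝ) :
    Matrix (Fin N₁ × Fin N₂) (Fin N₂) ℝ :=
  Matrix.of fun p j' => if p.2 = j' then rowNorm A p.1 / frobNorm A else 0

/-- The QSVE walk operator `W = (2PPᵀ - I)(2QQᵀ - I)` used for phase estimation. -/
noncomputable def Wop {N₁ N₂ : ℕ} (A : Matrix (Fin N₁) (Fin N₂) ℝ) :
    Matrix (Fin N₁ × Fin N₂) (Fin N₁ × Fin N₂) ℝ :=
  ((2 : ℝ) • (Pmat A * (Pmat A)ᵀ) - 1) * ((2 : ℝ) • (Qmat A * (Qmat A)ᵀ) - 1)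

/-! The columns of `Pmat A` and of `Qmat A` are orthonormal, and `(Pmat A)ᵀ * Qmat A = A / ‖A‖_F`.
Hence, if `A v = σ u` and `Aᵀ u = σ v`, the plane spanned by `x = Q v` and `y = P u` is invariant
under `W`: with `c = σ / ‖A‖_F`, `W x = 2c y - x` and `W y = (4c² - 1) y - 2c x`. For every root `ζ`
of `ζ² - 2cζ + 1`, in particular `ζ = e^{± iθ/2}` with `cos (θ/2) = c`, the vector `x - ζ y` is
then an eigenvector of `W` for `ζ² = e^{± iθ}`. It is nonzero since `x, y` are real and `ζ` is not,
except when `c = 1`; then `θ = 0`, and `x - y` or else `x` is a fixed vector of `W`. -/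

open Matrix

section Reflection

variable {ι m n R : Type*} [Fintype ι] [Fintype m] [Fintype n] [CommRing R]

theorem mulVec_ne_zero_of_transpose_mul_self [DecidableEq m] {P : Matrix ι m R}
    (hP : Pᵀ * P = 1) {u : m → R} (hu : u ≠ 0) : P *ᵥ u ≠ 0 := fun h =>
  hu (by rw [← one_mulVec u, ← hP, ← mulVec_mulVec, h, mulVec_zero])

variable [DecidableEq ι]

def colSpanReflection (P : Matrix ι m R) : Matrix ι ι R := (2 : R) • (P * Pᵀ) - 1

theorem colSpanReflection_mulVec_mulVec [DecidableEq m] {P : Matrix ι m R} (hP : Pᵀ * P = 1)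
    (u : m → R) : colSpanReflection P *ᵥ (P *ᵥ u) = P *ᵥ u := by
  rw [colSpanReflection, sub_mulVec, smul_mulVec, mulVec_mulVec, Matrix.mul_assoc, hP,
    Matrix.mul_one, one_mulVec, two_smul, add_sub_cancel_right]

theorem colSpanReflection_mulVec {P : Matrix ι m R} {x : ι → R} {u : m → R} {c : R}
    (hx : Pᵀ *ᵥ x = c • u) : colSpanReflection P *ᵥ x = (2 * c) • (P *ᵥ u) - x := by
  rw [colSpanReflection, sub_mulVec, smul_mulVec, ← mulVec_mulVec, hx, mulVec_smul, one_mulVec,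
    mul_smul]

-- `Wop A` is definitionally `walkOperator (Pmat A) (Qmat A)`.
def walkOperator (P : Matrix ι m R) (Q : Matrix ι n R) : Matrix ι ι R :=
  colSpanReflection P * colSpanReflection Q

variable {P : Matrix ι m R} {Q : Matrix ι n R} {u : m → R} {v : n → R} {c : R}

theorem walkOperator_mulVec_right_mulVec [DecidableEq n] (hQ : Qᵀ * Q = 1)
    (hv : (Pᵀ * Q) *ᵥ v = c • u) :
    walkOperator P Q *ᵥ (Q *ᵥ v) = (2 * c) • (P *ᵥ u) - Q *ᵥ v := by
  rw [walkOperator, ← mulVec_mulVec, colSpanReflection_mulVec_mulVec hQ,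
    colSpanReflection_mulVec (by rwa [mulVec_mulVec])]

theorem walkOperator_mulVec_left_mulVec [DecidableEq m] (hP : Pᵀ * P = 1)
    (hv : (Pᵀ * Q) *ᵥ v = c • u) (hu : (Qᵀ * P) *ᵥ u = c • v) :
    walkOperator P Q *ᵥ (P *ᵥ u) = (4 * c ^ 2 - 1) • (P *ᵥ u) - (2 * c) • (Q *ᵥ v) := by
  rw [walkOperator, ← mulVec_mulVec,
    colSpanReflection_mulVec (P := Q) (x := P *ᵥ u) (by rwa [mulVec_mulVec]), mulVec_sub,
    mulVec_smul, colSpanReflection_mulVec (by rwa [mulVec_mulVec]),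
    colSpanReflection_mulVec_mulVec hP]
  module

end Reflection

section InvariantPlane

variable {R V : Type*} [CommRing R] [AddCommGroup V] [Module R V] {f : Module.End R V}
  {x y : V} {c : R}

theorem apply_sub_smul_eq_sq_smul (hx : f x = (2 * c) • y - x)
    (hy : f y = (4 * c ^ 2 - 1) • y - (2 * c) • x) {ζ : R} (hζ : ζ ^ 2 - 2 * c * ζ + 1 = 0) :
    f (x - ζ • y) = ζ ^ 2 • (x - ζ • y) := by
  rw [map_sub, map_smul, hx, hy]
  linear_combination (norm := module) hζ • ((2 * c + ζ) • y - x)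

theorem exists_ne_zero_apply_eq_self (hx : f x = (2 * c) • y - x)
    (hy : f y = (4 * c ^ 2 - 1) • y - (2 * c) • x) (hc : c ^ 2 = 1) (hx0 : x ≠ 0) :
    ∃ w ≠ 0, f w = w := by
  by_cases hxy : x - c • y = 0
  · refine ⟨x, hx0, ?_⟩
    rw [sub_eq_zero] at hxy
    rw [hx, hxy]
    module
  · refine ⟨x - c • y, hxy, ?_⟩
    rw [apply_sub_smul_eq_sq_smul hx hy (by linear_combination -hc), hc, one_smul]

end InvariantPlane

theorem Matrix.exists_mulVec_eq_smul_of_mem_spectrum {K n : Type*} [Field K] [Fintype n]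
    [DecidableEq n] {B : Matrix n n K} {μ : K} (h : μ ∈ spectrum K B) :
    ∃ v ≠ 0, B *ᵥ v = μ • v := by
  rw [← spectrum_toLin', ← Module.End.hasEigenvalue_iff_mem_spectrum] at h
  obtain ⟨v, hv⟩ := h.exists_hasEigenvector
  exact ⟨v, hv.2, by simpa using hv.apply_eq_smul⟩

theorem Matrix.exists_singular_pair {K m n : Type*} [Field K] [Fintype m] [Fintype n]
    {A : Matrix m n K} {σ : K} (hσ : σ ≠ 0) {v : n → K} (hv0 : v ≠ 0)
    (hv : (Aᵀ * A) *ᵥ v = σ ^ 2 • v) : ∃ u ≠ 0, A *ᵥ v = σ • u ∧ Aᵀ *ᵥ u = σ • v := by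
  have hAtu : Aᵀ *ᵥ (σ⁻¹ • (A *ᵥ v)) = σ • v := by
    rw [mulVec_smul, mulVec_mulVec, hv, smul_smul, sq, inv_mul_cancel_left₀ hσ]
  refine ⟨_, fun hu => hv0 ?_, by rw [smul_inv_smul₀ hσ], hAtu⟩
  rw [hu, mulVec_zero] at hAtu
  exact (smul_eq_zero.mp hAtu.symm).resolve_left hσ

section Complexification

open Complex

theorem ofReal_comp_sub_smul_ne_zero {ι : Type*} {x y : ι → ℝ} (hy : y ≠ 0) {ζ : ℂ}
    (hζ : ζ.im ≠ 0) : ofReal ∘ x - ζ • (ofReal ∘ y) ≠ 0 := by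
  obtain ⟨i, hi⟩ := Function.ne_iff.mp hy
  intro h
  exact hi (by simpa [hζ] using congrArg im (congrFun h i))

theorem map_ofReal_mulVec {ι κ : Type*} [Fintype κ] (W : Matrix ι κ ℝ) (x : κ → ℝ) :
    W.map ofReal *ᵥ (ofReal ∘ x) = ofReal ∘ (W *ᵥ x) :=
  funext fun i => (RingHom.map_mulVec ofRealHom W x i).symm

theorem exp_half_mul_I_sq (θ : ℝ) : exp (↑(θ / 2) * I) ^ 2 = exp (θ * I) := by
  rw [← exp_nat_mul]
  push_cast
  ring_nf

theorem exp_half_mul_I_sq_sub_add_one (θ : ℝ) :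
    exp (↑(θ / 2) * I) ^ 2 - 2 * ↑(Real.cos (θ / 2)) * exp (↑(θ / 2) * I) + 1 = 0 := by
  have hinv : exp (-↑(θ / 2) * I) * exp (↑(θ / 2) * I) = 1 := by
    rw [← exp_add]
    simp
  rw [ofReal_cos, two_cos]
  linear_combination -hinv

theorem exists_ne_zero_map_ofReal_mulVec_eq_exp_smul {ι : Type*} [Fintype ι] (W : Matrix ι ι ℝ)
    {x y : ι → ℝ} (hx0 : x ≠ 0) (hy0 : y ≠ 0) {θ : ℝ}
    (hx : W *ᵥ x = (2 * Real.cos (θ / 2)) • y - x)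
    (hy : W *ᵥ y = (4 * Real.cos (θ / 2) ^ 2 - 1) • y - (2 * Real.cos (θ / 2)) • x) :
    ∃ w ≠ 0, W.map ofReal *ᵥ w = exp (θ * I) • w := by
  set c := Real.cos (θ / 2)
  set f := (W.map ofReal).mulVecLin
  have hxC : f (ofReal ∘ x) = (2 * (c : ℂ)) • (ofReal ∘ y) - ofReal ∘ x := by
    simp only [f, mulVecLin_apply, map_ofReal_mulVec, hx]
    funext i
    simp
  have hyC : f (ofReal ∘ y) =
      (4 * (c : ℂ) ^ 2 - 1) • (ofReal ∘ y) - (2 * (c : ℂ)) • (ofReal ∘ x) := by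
    simp only [f, mulVecLin_apply, map_ofReal_mulVec, hy]
    funext i
    simp
  by_cases hs : Real.sin (θ / 2) = 0
  · have hc : c ^ 2 = 1 := by nlinarith [Real.sin_sq_add_cos_sq (θ / 2)]
    have hexp : exp (θ * I) = 1 := by
      rw [← exp_half_mul_I_sq θ, exp_mul_I, ← ofReal_cos, ← ofReal_sin, hs, ofReal_zero,
        zero_mul, add_zero]
      exact_mod_cast hc
    obtain ⟨w, hw0, hw⟩ := exists_ne_zero_apply_eq_self hxC hyC (by exact_mod_cast hc)
      (ofReal_injective.comp_left.ne hx0)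
    exact ⟨w, hw0, by rwa [hexp, one_smul]⟩
  · refine ⟨ofReal ∘ x - exp (↑(θ / 2) * I) • (ofReal ∘ y),
      ofReal_comp_sub_smul_ne_zero hy0 (by rwa [exp_ofReal_mul_I_im]), ?_⟩
    rw [← exp_half_mul_I_sq θ]
    exact apply_sub_smul_eq_sq_smul hxC hyC (exp_half_mul_I_sq_sub_add_one θ)

end Complexification

section KerenidisPrakash

variable {N₁ N₂ : ℕ} {A : Matrix (Fin N₁) (Fin N₂) ℝ}

theorem rowNorm_sq (A : Matrix (Fin N₁) (Fin N₂) ℝ) (i : Fin N₁) :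
    rowNorm A i ^ 2 = ∑ j, A i j ^ 2 :=
  Real.sq_sqrt (Finset.sum_nonneg fun _ _ => sq_nonneg _)

theorem frobNorm_sq (A : Matrix (Fin N₁) (Fin N₂) ℝ) :
    frobNorm A ^ 2 = ∑ i, rowNorm A i ^ 2 := by
  simp only [rowNorm_sq]
  exact Real.sq_sqrt (Finset.sum_nonneg fun _ _ => Finset.sum_nonneg fun _ _ => sq_nonneg _)

theorem rowNorm_pos {i : Fin N₁} (h : ∃ j, A i j ≠ 0) : 0 < rowNorm A i := by
  obtain ⟨j, hj⟩ := h
  exact Real.sqrt_pos.mpr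
    (Finset.sum_pos' (fun _ _ => sq_nonneg _) ⟨j, Finset.mem_univ _, by positivity⟩)

theorem frobNorm_pos (hA : A ≠ 0) : 0 < frobNorm A := by
  obtain ⟨i, j, hij⟩ : ∃ i j, A i j ≠ 0 := by simpa [← Matrix.ext_iff] using hA
  exact Real.sqrt_pos.mpr (Finset.sum_pos' (fun _ _ => Finset.sum_nonneg fun _ _ => sq_nonneg _)
    ⟨i, Finset.mem_univ _, Real.sqrt_pos.mp (rowNorm_pos ⟨j, hij⟩)⟩)

theorem Pmat_transpose_mul_Pmat (hrow : ∀ i, rowNorm A i ≠ 0) : (Pmat A)ᵀ * Pmat A = 1 := by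
  ext a b
  simp only [Pmat, mul_apply, transpose_apply, of_apply, mul_ite, ite_mul, zero_mul, mul_zero,
    Fintype.sum_prod_type, Finset.sum_ite_irrel, Finset.sum_const_zero, Finset.sum_ite_eq',
    Finset.mem_univ, ↓reduceIte]
  rcases eq_or_ne b a with rfl | hba
  · rw [if_pos rfl, one_apply_eq]
    simp_rw [div_mul_div_comm, ← sq, ← Finset.sum_div, ← rowNorm_sq]
    exact div_self (pow_ne_zero 2 (hrow b))
  · rw [if_neg hba, one_apply_ne hba.symm]

theorem Qmat_transpose_mul_Qmat (hA : frobNorm A ≠ 0) : (Qmat A)ᵀ * Qmat A = 1 := by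
  ext a b
  simp only [Qmat, mul_apply, transpose_apply, of_apply, mul_ite, ite_mul, zero_mul, mul_zero,
    Fintype.sum_prod_type, Finset.sum_ite_eq', Finset.mem_univ, ↓reduceIte, Finset.sum_ite_irrel,
    Finset.sum_const_zero]
  rcases eq_or_ne b a with rfl | hba
  · rw [if_pos rfl, one_apply_eq]
    simp_rw [div_mul_div_comm, ← sq, ← Finset.sum_div, ← frobNorm_sq]
    exact div_self (pow_ne_zero 2 hA)
  · rw [if_neg hba, one_apply_ne hba.symm]

theorem Pmat_transpose_mul_Qmat (hrow : ∀ i, rowNorm A i ≠ 0) :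
    (Pmat A)ᵀ * Qmat A = (frobNorm A)⁻¹ • A := by
  ext a b
  simp only [Pmat, Qmat, mul_apply, transpose_apply, of_apply, mul_ite, ite_mul, zero_mul,
    mul_zero, Fintype.sum_prod_type, Finset.sum_ite_eq', Finset.mem_univ, ↓reduceIte,
    Matrix.smul_apply, smul_eq_mul]
  rw [div_mul_div_cancel₀ (hrow a), div_eq_inv_mul]

theorem mulVec_dotProduct_self_le (A : Matrix (Fin N₁) (Fin N₂) ℝ) (v : Fin N₂ → ℝ) :
    (A *ᵥ v) ⬝ᵥ (A *ᵥ v) ≤ frobNorm A ^ 2 * (v ⬝ᵥ v) := by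
  rw [frobNorm_sq, Finset.sum_mul]
  refine Finset.sum_le_sum fun i _ => ?_
  rw [rowNorm_sq]
  simpa [mulVec, dotProduct, sq] using Finset.sum_mul_sq_le_sq_mul_sq Finset.univ (A i) v

theorem le_frobNorm_sq_of_mulVec_eq_smul {v : Fin N₂ → ℝ} (hv0 : v ≠ 0) {μ : ℝ}
    (hv : (Aᵀ * A) *ᵥ v = μ • v) : μ ≤ frobNorm A ^ 2 := by
  have hpos : 0 < v ⬝ᵥ v :=
    (Finset.sum_nonneg fun i _ => mul_self_nonneg (v i)).lt_of_ne'
      (dotProduct_self_eq_zero.not.mpr hv0)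
  have hμ : μ * (v ⬝ᵥ v) = (A *ᵥ v) ⬝ᵥ (A *ᵥ v) := by
    rw [← smul_eq_mul, ← smul_dotProduct, ← hv, dotProduct_comm, ← mulVec_mulVec,
      dotProduct_mulVec, vecMul_transpose]
  exact le_of_mul_le_mul_right (hμ ▸ mulVec_dotProduct_self_le A v) hpos

theorem Qmat_transpose_mul_Pmat (hrow : ∀ i, rowNorm A i ≠ 0) :
    (Qmat A)ᵀ * Pmat A = (frobNorm A)⁻¹ • Aᵀ := by
  rw [← transpose_transpose (Pmat A), ← transpose_mul, Pmat_transpose_mul_Qmat hrow,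
    transpose_smul]

variable {u : Fin N₁ → ℝ} {v : Fin N₂ → ℝ} {σ : ℝ}

theorem Wop_mulVec_Qmat_mulVec (hrow : ∀ i, rowNorm A i ≠ 0) (hF : frobNorm A ≠ 0)
    (hv : A *ᵥ v = σ • u) :
    Wop A *ᵥ (Qmat A *ᵥ v) = (2 * (σ / frobNorm A)) • (Pmat A *ᵥ u) - Qmat A *ᵥ v :=
  walkOperator_mulVec_right_mulVec (Qmat_transpose_mul_Qmat hF)
    (by rw [Pmat_transpose_mul_Qmat hrow, smul_mulVec, hv, smul_smul, inv_mul_eq_div])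

theorem Wop_mulVec_Pmat_mulVec (hrow : ∀ i, rowNorm A i ≠ 0) (hv : A *ᵥ v = σ • u)
    (hu : Aᵀ *ᵥ u = σ • v) :
    Wop A *ᵥ (Pmat A *ᵥ u) =
      (4 * (σ / frobNorm A) ^ 2 - 1) • (Pmat A *ᵥ u) - (2 * (σ / frobNorm A)) • (Qmat A *ᵥ v) :=
  walkOperator_mulVec_left_mulVec (Pmat_transpose_mul_Pmat hrow)
    (by rw [Pmat_transpose_mul_Qmat hrow, smul_mulVec, hv, smul_smul, inv_mul_eq_div])
    (by rw [Qmat_transpose_mul_Pmat hrow, smul_mulVec, hu, smul_smul, inv_mul_eq_div])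

end KerenidisPrakash

/-- **Eigenvalues of the QSVE walk operator encode the singular values:** if `A ≠ 0` has
all rows nonzero and `σ > 0` is a singular value of `A` (i.e. `σ²` is an eigenvalue of
`AᵀA`), then there is `θ ∈ [0, π]` with `cos(θ/2) = σ/‖A‖_F` such that both `e^{iθ}` and
`e^{-iθ}` are eigenvalues of `W` regarded as a complex matrix. -/
theorem Wop_eigenvalues {N₁ N₂ : ℕ}
    (A : Matrix (Fin N₁) (Fin N₂) ℝ) (hA : A ≠ 0)
    (hrows : ∀ i : Fin N₁, ∃ j : Fin N₂, A i j ≠ 0)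
    (σ : ℝ) (hσ : 0 < σ) (hsv : σ ^ 2 ∈ spectrum ℝ (Aᵀ * A)) :
    ∃ θ ∈ Set.Icc (0 : ℝ) Real.pi,
      Real.cos (θ / 2) = σ / frobNorm A ∧
      (∃ wp : Fin N₁ × Fin N₂ → ℂ, wp ≠ 0 ∧
        (Wop A).map Complex.ofReal *ᵥ wp = Complex.exp (θ * Complex.I) • wp) ∧
      (∃ wm : Fin N₁ × Fin N₂ → ℂ, wm ≠ 0 ∧
        (Wop A).map Complex.ofReal *ᵥ wm = Complex.exp (-θ * Complex.I) • wm) := by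
  have hrow : ∀ i, rowNorm A i ≠ 0 := fun i => (rowNorm_pos (hrows i)).ne'
  have hF : 0 < frobNorm A := frobNorm_pos hA
  obtain ⟨v, hv0, hv⟩ := exists_mulVec_eq_smul_of_mem_spectrum hsv
  obtain ⟨u, hu0, hvu, huv⟩ := exists_singular_pair hσ.ne' hv0 hv
  have hc : 0 < σ / frobNorm A := div_pos hσ hF
  have hc1 : σ / frobNorm A ≤ 1 := (div_le_one hF).mpr <|
    (pow_le_pow_iff_left₀ hσ.le hF.le two_ne_zero).mp (le_frobNorm_sq_of_mulVec_eq_smul hv0 hv)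
  set θ := 2 * Real.arccos (σ / frobNorm A)
  have hcos : Real.cos (θ / 2) = σ / frobNorm A := by
    rw [mul_div_cancel_left₀ _ two_ne_zero, Real.cos_arccos (by linarith) hc1]
  have hcos' : Real.cos (-θ / 2) = σ / frobNorm A := by rw [neg_div, Real.cos_neg, hcos]
  have hx0 := mulVec_ne_zero_of_transpose_mul_self (Qmat_transpose_mul_Qmat hF.ne') hv0
  have hy0 := mulVec_ne_zero_of_transpose_mul_self (Pmat_transpose_mul_Pmat hrow) hu0
  have hx := Wop_mulVec_Qmat_mulVec hrow hF.ne' hvu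
  have hy := Wop_mulVec_Pmat_mulVec hrow hvu huv
  refine ⟨θ, ⟨mul_nonneg zero_le_two (Real.arccos_nonneg _), ?_⟩, hcos, ?_, ?_⟩
  · linarith [Real.arccos_le_pi_div_two.mpr hc.le]
  · exact exists_ne_zero_map_ofReal_mulVec_eq_exp_smul _ hx0 hy0 (hcos ▸ hx) (hcos ▸ hy)
  · obtain ⟨w, hw0, hw⟩ :=
      exists_ne_zero_map_ofReal_mulVec_eq_exp_smul _ hx0 hy0 (hcos' ▸ hx) (hcos' ▸ hy)
    exact ⟨w, hw0, by rwa [Complex.ofReal_neg] at hw⟩
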